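/- arXiv:2110.15845 — 2 statements merged into one kernel-verified Lean document; each statement's English description precedes it below -/
import Mathlib

section
/- Let $\psi(q) = 1/(q \log q)$ for $q \ge 2$. Then the set of $\omega \in [1,\infty)$ for which there exist infinitely many pairs $(p,q) \in \mathbb{Z} \times \mathbb{N}$ with $|\omega - p/q| \le \psi(q)/q$ has full Lebesgue measure in $[1,\infty)$, i.e. its complement in $[1,\infty)$ has Lebesgue measure zero. -/
/-!
Let `x ∈ (0, 1)` be irrational with convergents `pₙ / qₙ`, and write
`x = [0; a₁, …, aₙ + t]` with `t ∈ (0, 1)`. Then `|x - pₙ / qₙ| ≤ t / qₙ²` and `t < 1 / aₙ₊₁`,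
so `pₙ / qₙ` is a `ψ`-approximation as soon as `aₙ₊₁ > log qₙ`. A point without
`ψ`-approximations of denominator at least `N` therefore has `aₙ₊₁ ≤ log qₙ` at every level
beyond `N`. Inside a cylinder of denominator `q`, the children with `aₙ₊₁ ≤ m - 1`, where
`m = ⌊log q⌋ + 1`, fill at most the proportion `1 - 1 / m` of its length, and their
denominators are at most `q m`. Iterating along `q ↦ q m`, the surviving proportion is at most
`∏ (1 - 1 / m) ≤ exp (-∑ 1 / m)`, which tends to `0` because `log log log q` grows by at most
`4 / m` per step. Rationals form a null set, and the property is invariant under integer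
translations.
-/

open MeasureTheory Set Filter Real Topology

namespace Khinchin

/-! ### Continued fraction cylinders -/

/-- The entry `a` codes the partial quotient `a + 1`, so that every list is admissible. For
`l = [a₁, …, aₙ]` the product is `!![pₙ₋₁, pₙ; qₙ₋₁, qₙ]`, the convergents of
`[0; a₁ + 1, …, aₙ + 1]`. -/
def cfMatrix (l : List ℕ) : Matrix (Fin 2) (Fin 2) ℕ :=
  (l.map fun a => !![0, 1; 1, a + 1]).prod

def cfNum (l : List ℕ) : ℕ := cfMatrix l 0 1

def cfNumPrev (l : List ℕ) : ℕ := cfMatrix l 0 0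

def cfDen (l : List ℕ) : ℕ := cfMatrix l 1 1

def cfDenPrev (l : List ℕ) : ℕ := cfMatrix l 1 0

theorem cfMatrix_append_singleton (l : List ℕ) (a : ℕ) :
    cfMatrix (l ++ [a]) = cfMatrix l * !![0, 1; 1, a + 1] := by
  simp [cfMatrix]

section Entries

variable (l : List ℕ) (a : ℕ)

@[simp] theorem cfNum_nil : cfNum [] = 0 := rfl

@[simp] theorem cfNumPrev_nil : cfNumPrev [] = 1 := rfl

@[simp] theorem cfDen_nil : cfDen [] = 1 := rfl

@[simp] theorem cfDenPrev_nil : cfDenPrev [] = 0 := rfl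

@[simp] theorem cfNum_append_singleton :
    cfNum (l ++ [a]) = cfNumPrev l + (a + 1) * cfNum l := by
  simp [cfNum, cfNumPrev, cfMatrix_append_singleton, Matrix.mul_apply, mul_comm]

@[simp] theorem cfNumPrev_append_singleton : cfNumPrev (l ++ [a]) = cfNum l := by
  simp [cfNum, cfNumPrev, cfMatrix_append_singleton, Matrix.mul_apply]

@[simp] theorem cfDen_append_singleton :
    cfDen (l ++ [a]) = cfDenPrev l + (a + 1) * cfDen l := by
  simp [cfDen, cfDenPrev, cfMatrix_append_singleton, Matrix.mul_apply, mul_comm]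

@[simp] theorem cfDenPrev_append_singleton : cfDenPrev (l ++ [a]) = cfDen l := by
  simp [cfDen, cfDenPrev, cfMatrix_append_singleton, Matrix.mul_apply]

end Entries

theorem fib_le_cfDen (l : List ℕ) :
    Nat.fib (l.length + 1) ≤ cfDen l ∧ Nat.fib l.length ≤ cfDenPrev l := by
  induction l using List.reverseRecOn with
  | nil => simp
  | append_singleton l a ih =>
    simp only [List.length_append, List.length_singleton, cfDen_append_singleton,
      cfDenPrev_append_singleton, Nat.fib_add_two]
    exact ⟨by nlinarith, ih.1⟩

theorem one_le_cfDen (l : List ℕ) : 1 ≤ cfDen l :=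
  (Nat.fib_pos.2 l.length.succ_pos).trans_le (fib_le_cfDen l).1

theorem length_le_cfDen {l : List ℕ} (hl : 5 ≤ l.length) : l.length ≤ cfDen l :=
  (Nat.le_fib_self hl).trans (Nat.fib_le_fib_succ.trans (fib_le_cfDen l).1)

theorem cfDenPrev_le_cfDen (l : List ℕ) : cfDenPrev l ≤ cfDen l := by
  induction l using List.reverseRecOn with
  | nil => simp
  | append_singleton l a _ =>
    simp only [cfDen_append_singleton, cfDenPrev_append_singleton]
    nlinarith

theorem cfDen_le_cfDen_append (l : List ℕ) (a : ℕ) : cfDen l ≤ cfDen (l ++ [a]) := by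
  rw [cfDen_append_singleton]
  nlinarith

theorem cfDen_append_le {l : List ℕ} {a k : ℕ} (h : a < k) :
    cfDen (l ++ [a]) ≤ cfDen l * (k + 1) := by
  rw [cfDen_append_singleton]
  nlinarith [cfDenPrev_le_cfDen l]

theorem cfNumPrev_mul_cfDen_sub (l : List ℕ) :
    (cfNumPrev l * cfDen l - cfNum l * cfDenPrev l : ℤ) = (-1) ^ l.length := by
  induction l using List.reverseRecOn with
  | nil => simp
  | append_singleton l a ih =>
    simp only [cfNum_append_singleton, cfNumPrev_append_singleton, cfDen_append_singleton,
      cfDenPrev_append_singleton, List.length_append, List.length_singleton, pow_succ]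
    push_cast
    linear_combination -ih

/-- `cfMap l t = [0; a₁ + 1, …, aₙ₋₁ + 1, aₙ + 1 + t]` for `l = [a₁, …, aₙ]`. -/
noncomputable def cfMap (l : List ℕ) (t : ℝ) : ℝ :=
  (cfNumPrev l * t + cfNum l) / (cfDenPrev l * t + cfDen l)

theorem cfMap_denom_pos (l : List ℕ) {t : ℝ} (ht : 0 ≤ t) :
    0 < (cfDenPrev l * t + cfDen l : ℝ) := by
  have : (1 : ℝ) ≤ cfDen l := by exact_mod_cast one_le_cfDen l
  positivity

theorem cfMap_append_singleton (l : List ℕ) (a : ℕ) {s : ℝ} (hs : 0 ≤ s) :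
    cfMap (l ++ [a]) s = cfMap l (a + 1 + s)⁻¹ := by
  have hd := cfMap_denom_pos (l ++ [a]) hs
  simp only [cfMap, cfNum_append_singleton, cfNumPrev_append_singleton, cfDen_append_singleton,
    cfDenPrev_append_singleton] at hd ⊢
  push_cast at hd ⊢
  have : (0 : ℝ) < a + 1 + s := by positivity
  field_simp
  ring

theorem abs_cfMap_sub (l : List ℕ) {t : ℝ} (ht : 0 ≤ t) :
    |cfMap l t - cfNum l / cfDen l| = t / ((cfDenPrev l * t + cfDen l) * cfDen l) := by
  have hd := cfMap_denom_pos l ht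
  have hq : (0 : ℝ) < cfDen l := by exact_mod_cast one_le_cfDen l
  have hdet : |(cfNumPrev l * cfDen l - cfNum l * cfDenPrev l : ℝ)| = 1 := by
    have := congrArg (Int.cast : ℤ → ℝ) (cfNumPrev_mul_cfDen_sub l)
    push_cast at this
    simp [this]
  have hsub : cfMap l t - cfNum l / cfDen l =
      t * (cfNumPrev l * cfDen l - cfNum l * cfDenPrev l) /
        ((cfDenPrev l * t + cfDen l) * cfDen l) := by
    rw [cfMap]
    field_simp
    ring
  rw [hsub, abs_div, abs_mul, hdet, abs_of_nonneg ht, abs_of_pos (by positivity), mul_one]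

noncomputable def cylinderLength (l : List ℕ) : ℝ :=
  ((cfDen l : ℝ) * (cfDen l + cfDenPrev l))⁻¹

theorem cylinderLength_pos (l : List ℕ) : 0 < cylinderLength l := by
  have : (0 : ℝ) < cfDen l := by exact_mod_cast one_le_cfDen l
  unfold cylinderLength
  positivity

/-- The irrationals in `(0, 1)` whose continued fraction begins with the partial quotients coded
by `l`: an interval of length `cylinderLength l` with endpoint `cfNum l / cfDen l`. -/
noncomputable def cylinder (l : List ℕ) : Set ℝ := cfMap l '' (Ioo 0 1 ∩ {t | Irrational t})

theorem cylinder_nil : cylinder [] = Ioo 0 1 ∩ {t | Irrational t} := by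
  rw [cylinder, show cfMap [] = id from funext fun t => by simp [cfMap], image_id]

theorem volume_cylinder_le (l : List ℕ) :
    volume (cylinder l) ≤ ENNReal.ofReal (2 * cylinderLength l) := by
  rw [← Real.volume_closedBall (cfNum l / cfDen l)]
  refine measure_mono ?_
  rintro _ ⟨t, ⟨⟨ht0, ht1⟩, -⟩, rfl⟩
  have hq : (0 : ℝ) < cfDen l := by exact_mod_cast one_le_cfDen l
  have hq' : (0 : ℝ) ≤ cfDenPrev l := by positivity
  rw [Metric.mem_closedBall, Real.dist_eq, abs_cfMap_sub l ht0.le, cylinderLength,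
    div_le_iff₀ (by positivity)]
  field_simp
  nlinarith [mul_nonneg hq' (sub_nonneg.2 ht1.le), mul_nonneg hq' ht0.le]

theorem exists_eq_inv_add {t : ℝ} (ht : t ∈ Ioo 0 1) (hirr : Irrational t) :
    ∃ a : ℕ, ∃ s ∈ Ioo (0 : ℝ) 1, Irrational s ∧ t = (a + 1 + s)⁻¹ := by
  have h1 : 1 ≤ ⌊t⁻¹⌋₊ := Nat.le_floor (by simpa using (one_le_inv₀ ht.1).2 ht.2.le)
  have hs : Irrational (t⁻¹ - ⌊t⁻¹⌋₊) := hirr.inv.sub_natCast _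
  refine ⟨⌊t⁻¹⌋₊ - 1, t⁻¹ - ⌊t⁻¹⌋₊, ⟨?_, ?_⟩, hs, ?_⟩
  · exact (sub_nonneg.2 (Nat.floor_le (inv_pos.2 ht.1).le)).lt_of_ne
      fun h => hs ⟨0, by simp [h]⟩
  · linarith [Nat.lt_floor_add_one t⁻¹]
  · rw [Nat.cast_sub h1]
    simp

theorem cfMap_mem_cylinder_append (l : List ℕ) (a : ℕ) {s : ℝ} (hs : s ∈ Ioo 0 1)
    (hirr : Irrational s) : cfMap l (a + 1 + s)⁻¹ ∈ cylinder (l ++ [a]) :=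
  ⟨s, ⟨hs, hirr⟩, cfMap_append_singleton l a hs.1.le⟩

theorem cylinder_subset_iUnion_append (l : List ℕ) :
    cylinder l ⊆ ⋃ a, cylinder (l ++ [a]) := by
  rintro _ ⟨t, ⟨ht, hirr⟩, rfl⟩
  obtain ⟨a, s, hs, hsirr, rfl⟩ := exists_eq_inv_add ht hirr
  exact mem_iUnion.2 ⟨a, cfMap_mem_cylinder_append l a hs hsirr⟩

theorem subset_iUnion_cylinder (n : ℕ) :
    Ioo 0 1 ∩ {t | Irrational t} ⊆ ⋃ (l : List ℕ) (_ : l.length = n), cylinder l := by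
  induction n with
  | zero => simp [cylinder_nil]
  | succ n ih =>
    refine ih.trans (iUnion₂_subset fun l hl => (cylinder_subset_iUnion_append l).trans ?_)
    exact iUnion_subset fun a => subset_iUnion₂_of_subset (l ++ [a]) (by simp [hl]) subset_rfl

theorem sum_cylinderLength_append_le (l : List ℕ) (k : ℕ) :
    ∑ a ∈ Finset.range k, cylinderLength (l ++ [a]) ≤ (1 - 1 / (k + 1)) * cylinderLength l := by
  have hq : (0 : ℝ) < cfDen l := by exact_mod_cast one_le_cfDen l
  have hq' : (0 : ℝ) ≤ cfDenPrev l := by positivity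
  -- The children `l ++ [a]` tile their parent from one end: their lengths telescope.
  let f (i : ℕ) : ℝ := ((cfDen l : ℝ) * (cfDenPrev l + (i + 1) * cfDen l))⁻¹
  have hsum : ∑ a ∈ Finset.range k, cylinderLength (l ++ [a]) = f 0 - f k := by
    rw [← Finset.sum_range_sub']
    refine Finset.sum_congr rfl fun a _ => ?_
    simp only [cylinderLength, cfDen_append_singleton, cfDenPrev_append_singleton, f]
    push_cast
    field_simp
    ring
  have hf0 : f 0 = cylinderLength l := by simp [f, cylinderLength, add_comm]
  have hfk : cylinderLength l / (k + 1) ≤ f k := by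
    simp only [f, cylinderLength]
    rw [div_le_iff₀ (by positivity)]
    field_simp
    nlinarith [mul_nonneg (k.cast_nonneg : (0 : ℝ) ≤ k) hq']
  rw [hsum, hf0]
  linarith [show (1 - 1 / (k + 1)) * cylinderLength l =
    cylinderLength l - cylinderLength l / (k + 1) by ring]

/-! ### Cylinders with bounded partial quotients -/

/-- An upper bound for the proportion of a cylinder with denominator `q` taken up by the points
whose next `j` partial quotients are each at most `k` of the current denominator. -/
noncomputable def survivalBound (k : ℕ → ℕ) : ℕ → ℕ → ℝ
  | 0, _ => 1
  | j + 1, q => (1 - 1 / (k q + 1)) * survivalBound k j (q * (k q + 1))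

theorem one_sub_inv_succ_nonneg (n : ℕ) : (0 : ℝ) ≤ 1 - 1 / (n + 1) := by
  rw [sub_nonneg, div_le_one (by positivity)]
  simp

theorem survivalBound_nonneg (k : ℕ → ℕ) (j q : ℕ) : 0 ≤ survivalBound k j q := by
  induction j generalizing q with
  | zero => simp [survivalBound]
  | succ j ih => exact mul_nonneg (one_sub_inv_succ_nonneg _) (ih _)

theorem survivalBound_mono {k : ℕ → ℕ} (hk : Monotone k) (j : ℕ) :
    Monotone (survivalBound k j) := by
  induction j with
  | zero => exact fun _ _ _ => le_rfl
  | succ j ih =>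
    intro q₁ q₂ hq
    have hkq : (k q₁ : ℝ) ≤ k q₂ := by exact_mod_cast hk hq
    refine mul_le_mul ?_ (ih (Nat.mul_le_mul hq (Nat.succ_le_succ (hk hq))))
      (survivalBound_nonneg k j _) (one_sub_inv_succ_nonneg _)
    gcongr

theorem survivalBound_le_exp {k : ℕ → ℕ} {F : ℕ → ℝ} {N : ℕ}
    (hF : ∀ q, N ≤ q → F (q * (k q + 1)) - F q ≤ 4 / (k q + 1)) (j : ℕ) {q : ℕ}
    (hq : N ≤ q) :
    survivalBound k j q ≤ exp ((F q - F ((fun n => n * (k n + 1))^[j] q)) / 4) := by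
  induction j generalizing q with
  | zero => simp [survivalBound]
  | succ j ih =>
    have hq' : N ≤ q * (k q + 1) := hq.trans (Nat.le_mul_of_pos_right q (k q).succ_pos)
    calc survivalBound k (j + 1) q
        ≤ exp (-(1 / (k q + 1))) * exp ((F (q * (k q + 1)) -
            F ((fun n => n * (k n + 1))^[j] (q * (k q + 1)))) / 4) := by
          refine mul_le_mul ?_ (ih hq') (survivalBound_nonneg k j _) (exp_pos _).le
          linarith [add_one_le_exp (-(1 / (k q + 1) : ℝ))]
      _ ≤ _ := by
          rw [← exp_add, Function.iterate_succ_apply]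
          gcongr
          linarith [hF q hq, show (4 / (k q + 1) : ℝ) = 4 * (1 / (k q + 1)) by ring]

theorem volume_inter_cylinder_le {k : ℕ → ℕ} (hk : Monotone k) {E : Set ℝ} {N : ℕ}
    (hE : ∀ l, N ≤ cfDen l →
      E ∩ cylinder l ⊆ ⋃ a ∈ Finset.range (k (cfDen l)), cylinder (l ++ [a]))
    (j : ℕ) {l : List ℕ} (hl : N ≤ cfDen l) :
    volume (E ∩ cylinder l) ≤
      ENNReal.ofReal (2 * cylinderLength l * survivalBound k j (cfDen l)) := by
  induction j generalizing l with
  | zero =>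
    simpa [survivalBound] using (measure_mono inter_subset_right).trans (volume_cylinder_le l)
  | succ j ih =>
    set q := cfDen l
    let bound (a : ℕ) : ℝ := 2 * cylinderLength (l ++ [a]) * survivalBound k j (q * (k q + 1))
    have hbound : ∀ a, 0 ≤ bound a := fun a =>
      mul_nonneg (mul_nonneg zero_le_two (cylinderLength_pos _).le) (survivalBound_nonneg k j _)
    have hchild : ∀ a ∈ Finset.range (k q),
        volume (E ∩ cylinder (l ++ [a])) ≤ ENNReal.ofReal (bound a) := fun a ha =>
      (ih (hl.trans (cfDen_le_cfDen_append l a))).trans <| ENNReal.ofReal_le_ofReal <|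
        mul_le_mul_of_nonneg_left
          (survivalBound_mono hk j (cfDen_append_le (Finset.mem_range.1 ha)))
          (mul_nonneg zero_le_two (cylinderLength_pos _).le)
    have hsum : ∑ a ∈ Finset.range (k q), bound a ≤
        2 * cylinderLength l * survivalBound k (j + 1) q := by
      simp only [bound, ← Finset.sum_mul, ← Finset.mul_sum, survivalBound]
      have := sum_cylinderLength_append_le l (k q)
      have := survivalBound_nonneg k j (q * (k q + 1))
      nlinarith
    calc volume (E ∩ cylinder l)
        ≤ volume (⋃ a ∈ Finset.range (k q), E ∩ cylinder (l ++ [a])) := by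
          rw [← inter_iUnion₂]
          exact measure_mono (subset_inter inter_subset_left (hE l hl))
      _ ≤ ∑ a ∈ Finset.range (k q), volume (E ∩ cylinder (l ++ [a])) :=
          measure_biUnion_finset_le _ _
      _ ≤ ∑ a ∈ Finset.range (k q), ENNReal.ofReal (bound a) := Finset.sum_le_sum hchild
      _ = ENNReal.ofReal (∑ a ∈ Finset.range (k q), bound a) :=
          (ENNReal.ofReal_sum_of_nonneg fun a _ => hbound a).symm
      _ ≤ _ := ENNReal.ofReal_le_ofReal hsum

/-! ### Partial quotients below `log q` -/

theorem log_add_le_add_div {A B : ℝ} (hA : 0 < A) (hB : 0 ≤ B) :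
    log (A + B) ≤ log A + B / A := by
  have := log_le_sub_one_of_pos (show 0 < (A + B) / A by positivity)
  rw [log_div (by positivity) hA.ne', add_div, div_self hA.ne'] at this
  linarith

theorem log_log_add_log_sub_le {ℓ m : ℝ} (hℓ : 2 ≤ ℓ) (hm : 1 ≤ m) (hmℓ : m ≤ 2 * ℓ) :
    log (log (ℓ + log m)) - log (log ℓ) ≤ 4 / m := by
  have hlogm : 0 ≤ log m := log_nonneg hm
  have hlogℓ : 0 < log ℓ := log_pos (by linarith)
  have hlogm_le : log m ≤ 2 * log ℓ := by
    calc log m ≤ log (2 * ℓ) := log_le_log (by linarith) hmℓ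
      _ = log 2 + log ℓ := log_mul two_ne_zero (by positivity)
      _ ≤ 2 * log ℓ := by linarith [log_le_log two_pos hℓ]
  have hinner : log (ℓ + log m) ≤ log ℓ + log m / ℓ := log_add_le_add_div (by positivity) hlogm
  have hpos : 0 < log (ℓ + log m) := hlogℓ.trans_le (log_le_log (by positivity) (by linarith))
  have houter : log (log (ℓ + log m)) ≤ log (log ℓ) + log m / ℓ / log ℓ :=
    (log_le_log hpos hinner).trans (log_add_le_add_div hlogℓ (by positivity))
  have hfinal : log m / ℓ / log ℓ ≤ 4 / m := by
    rw [div_div, div_le_div_iff₀ (by positivity) (by positivity)]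
    nlinarith [mul_le_mul hmℓ hlogm_le hlogm (by positivity)]
  linarith

theorem two_le_log_of_eight_le {q : ℕ} (hq : 8 ≤ q) : 2 ≤ log q := by
  rw [le_log_iff_exp_le (by positivity), show (2 : ℝ) = 1 + 1 by norm_num, exp_add]
  have := exp_one_lt_d9
  have : (8 : ℝ) ≤ q := by exact_mod_cast hq
  nlinarith [exp_pos 1]

noncomputable def floorLog (n : ℕ) : ℕ := ⌊log n⌋₊

theorem floorLog_mono : Monotone floorLog := by
  intro n m h
  rcases n.eq_zero_or_pos with rfl | hn
  · simp [floorLog]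
  · exact Nat.floor_mono (log_le_log (by exact_mod_cast hn) (by exact_mod_cast h))

theorem log_lt_floorLog_add_one (n : ℕ) : log n < floorLog n + 1 := Nat.lt_floor_add_one _

theorem log_log_log_mul_sub_le {q : ℕ} (hq : 8 ≤ q) :
    log (log (log (q * (floorLog q + 1) : ℕ))) - log (log (log q)) ≤
      4 / (floorLog q + 1) := by
  have hℓ := two_le_log_of_eight_le hq
  have hfloor : (floorLog q : ℝ) ≤ log q := Nat.floor_le (by linarith)
  push_cast
  rw [log_mul (by positivity) (by positivity)]
  exact log_log_add_log_sub_le hℓ (by simp) (by linarith)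

theorem tendsto_survivalBound_floorLog {q : ℕ} (hq : 8 ≤ q) :
    Tendsto (fun j => survivalBound floorLog j q) atTop (𝓝 0) := by
  let step (n : ℕ) : ℕ := n * (floorLog n + 1)
  have hstep : ∀ n, 8 ≤ n → n + 1 ≤ step n := fun n hn => by
    have : 1 ≤ floorLog n := Nat.le_floor (by norm_num; linarith [two_le_log_of_eight_le hn])
    simp only [step]
    nlinarith
  have horbit : ∀ j n, 8 ≤ n → n + j ≤ step^[j] n := by
    intro j
    induction j with
    | zero => simp
    | succ j ih =>
      intro n hn
      rw [Function.iterate_succ_apply]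
      linarith [ih (step n) (by linarith [hstep n hn]), hstep n hn]
  have horbit_tendsto : Tendsto (fun j => (step^[j] q : ℝ)) atTop atTop := by
    refine tendsto_natCast_atTop_atTop.comp (tendsto_atTop_mono (fun j => ?_) tendsto_id)
    exact (Nat.le_add_left j q).trans (horbit j q hq)
  have hF : Tendsto (fun j => log (log (log (step^[j] q : ℝ)))) atTop atTop :=
    tendsto_log_atTop.comp (tendsto_log_atTop.comp (tendsto_log_atTop.comp horbit_tendsto))
  have hexp : Tendsto
      (fun j => exp ((log (log (log q)) - log (log (log (step^[j] q : ℝ)))) / 4)) atTop (𝓝 0) := by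
    refine tendsto_exp_atBot.comp (Tendsto.atBot_div_const (by norm_num) ?_)
    simpa only [sub_eq_add_neg, Function.comp_def] using
      tendsto_atBot_add_const_left _ _ (tendsto_neg_atTop_atBot.comp hF)
  exact tendsto_of_tendsto_of_tendsto_of_le_of_le tendsto_const_nhds hexp
    (fun j => survivalBound_nonneg _ j q)
    (fun j => survivalBound_le_exp (F := fun n => log (log (log n))) (N := 8)
      (fun n hn => log_log_log_mul_sub_le hn) j hq)

/-! ### Numbers with finitely many `ψ`-approximations -/

def IsLogApprox (x : ℝ) (p : ℤ) (q : ℕ) : Prop := |x - p / q| ≤ 1 / (q * log q) / q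

def badLogApprox (N : ℕ) : Set ℝ := {x | ∀ q, N ≤ q → ∀ p : ℤ, ¬ IsLogApprox x p q}

theorem badLogApprox_mono : Monotone badLogApprox :=
  fun _ _ hNM _ hx q hq => hx q (hNM.trans hq)

theorem exists_mem_badLogApprox {x : ℝ}
    (h : {pq : ℤ × ℕ | 2 ≤ pq.2 ∧ IsLogApprox x pq.1 pq.2}.Finite) :
    ∃ N, x ∈ badLogApprox N := by
  obtain ⟨B, hB⟩ := (h.image Prod.snd).bddAbove
  refine ⟨B + 2, fun q hq p hp => ?_⟩
  have : q ≤ B := hB ⟨(p, q), ⟨by omega, hp⟩, rfl⟩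
  omega

theorem isLogApprox_add_mul_of_sub {x : ℝ} {p n : ℤ} {q : ℕ} (hq : q ≠ 0)
    (h : IsLogApprox (x - n) p q) : IsLogApprox x (p + n * q) q := by
  rw [IsLogApprox] at h ⊢
  convert h using 2
  push_cast
  field_simp
  ring

theorem isLogApprox_cfMap {l : List ℕ} (hq : 2 ≤ cfDen l) {t : ℝ} (ht0 : 0 ≤ t)
    (ht : t * log (cfDen l) ≤ 1) : IsLogApprox (cfMap l t) (cfNum l) (cfDen l) := by
  have hq0 : (2 : ℝ) ≤ cfDen l := by exact_mod_cast hq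
  have hlog : 0 < log (cfDen l) := log_pos (by linarith)
  have hq' : (0 : ℝ) ≤ cfDenPrev l := by positivity
  rw [IsLogApprox, Int.cast_natCast, abs_cfMap_sub l ht0, div_div,
    div_le_div_iff₀ (by positivity) (by positivity)]
  nlinarith [mul_le_mul_of_nonneg_right ht (by positivity : (0 : ℝ) ≤ cfDen l * cfDen l),
    mul_nonneg (mul_nonneg hq' ht0) (by positivity : (0 : ℝ) ≤ cfDen l)]

theorem badLogApprox_inter_cylinder_subset {N : ℕ} {l : List ℕ} (hN : N ≤ cfDen l)
    (h2 : 2 ≤ cfDen l) :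
    badLogApprox N ∩ cylinder l ⊆
      ⋃ a ∈ Finset.range (floorLog (cfDen l)), cylinder (l ++ [a]) := by
  rintro _ ⟨hbad, t, ⟨ht, hirr⟩, rfl⟩
  obtain ⟨a, s, hs, hsirr, rfl⟩ := exists_eq_inv_add ht hirr
  refine mem_iUnion₂.2 ⟨a, Finset.mem_range.2 ?_, cfMap_mem_cylinder_append l a hs hsirr⟩
  by_contra! ha
  refine hbad _ hN _ (isLogApprox_cfMap h2 ht.1.le ?_)
  have hlog : log (cfDen l) < a + 1 := by
    have : (floorLog (cfDen l) : ℝ) ≤ a := by exact_mod_cast ha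
    linarith [log_lt_floorLog_add_one (cfDen l)]
  have hlog0 : 0 ≤ log (cfDen l) := log_nonneg (by exact_mod_cast one_le_cfDen l)
  rw [inv_mul_le_iff₀ (by linarith [hs.1]), mul_one]
  linarith [hs.1]

theorem volume_badLogApprox_inter_cylinder {N : ℕ} (hN : 8 ≤ N) {l : List ℕ}
    (hl : N ≤ cfDen l) : volume (badLogApprox N ∩ cylinder l) = 0 := by
  have hlim : Tendsto (fun j => ENNReal.ofReal (2 * cylinderLength l *
      survivalBound floorLog j (cfDen l))) atTop (𝓝 0) := by
    simpa using ENNReal.tendsto_ofReal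
      ((tendsto_survivalBound_floorLog (hN.trans hl)).const_mul (2 * cylinderLength l))
  refine le_antisymm (ge_of_tendsto' hlim fun j => ?_) bot_le
  exact volume_inter_cylinder_le floorLog_mono
    (fun l' hl' => badLogApprox_inter_cylinder_subset hl' (by omega)) j hl

theorem volume_badLogApprox_inter_irrational {N : ℕ} (hN : 8 ≤ N) :
    volume (badLogApprox N ∩ (Ioo 0 1 ∩ {t | Irrational t})) = 0 := by
  refine measure_mono_null (inter_subset_inter_right _ (subset_iUnion_cylinder N)) ?_
  rw [inter_iUnion₂]
  refine measure_iUnion_null fun l => measure_iUnion_null fun hl => ?_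
  exact volume_badLogApprox_inter_cylinder hN (hl ▸ length_le_cfDen (by omega))

theorem volume_badLogApprox_inter_Ico {N : ℕ} (hN : 8 ≤ N) :
    volume (badLogApprox N ∩ Ico 0 1) = 0 := by
  refine measure_mono_null (fun x ⟨hx, hx0, hx1⟩ => ?_) (measure_union_null
    ((countable_range ((↑) : ℚ → ℝ)).measure_zero _) (volume_badLogApprox_inter_irrational hN))
  by_cases hirr : Irrational x
  · have hx0' : 0 < x := hx0.lt_of_ne (by rintro rfl; exact hirr ⟨0, by simp⟩)
    exact Or.inr ⟨hx, ⟨hx0', hx1⟩, hirr⟩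
  · exact Or.inl (by simpa [Irrational] using hirr)

theorem volume_badLogApprox (N : ℕ) : volume (badLogApprox N) = 0 := by
  refine measure_mono_null (badLogApprox_mono (le_max_left N 8)) ?_
  refine measure_mono_null (fun x hx => mem_iUnion.2 ⟨⌊x⌋, ?_⟩) (measure_iUnion_null
    fun n : ℤ => (measure_preimage_add_right volume (-n : ℝ) _).trans
      (volume_badLogApprox_inter_Ico (le_max_right N 8)))
  refine ⟨fun q hq p h => hx q hq _ (isLogApprox_add_mul_of_sub (by omega) h), ?_⟩
  show x + -(⌊x⌋ : ℝ) ∈ Ico 0 1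
  rw [← sub_eq_add_neg, Int.self_sub_floor]
  exact ⟨Int.fract_nonneg x, Int.fract_lt_one x⟩

end Khinchin

/-- Divergence part of Khinchin's theorem for `ψ(q) = 1/(q log q)`:
almost every `ω ∈ [1,∞)` admits infinitely many `(p,q)` with
`|ω - p/q| ≤ ψ(q)/q`. -/
theorem khinchin_log_approximable_full_measure :
    MeasureTheory.volume
      (Set.Ici (1 : ℝ) \
        {ω : ℝ | {pq : ℤ × ℕ | 2 ≤ pq.2 ∧
          |ω - (pq.1 : ℝ) / (pq.2 : ℝ)| ≤
            (1 / ((pq.2 : ℝ) * Real.log (pq.2 : ℝ))) / (pq.2 : ℝ)}.Infinite}) = 0 := by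
  refine measure_mono_null (fun x hx => ?_)
    (measure_iUnion_null Khinchin.volume_badLogApprox)
  exact mem_iUnion.2 (Khinchin.exists_mem_badLogApprox (not_infinite.1 hx.2))
end

section
/- Let $p, q \in \mathbb{N}$, $\omega \ge 1$, $c_1 > 0$ with $p \ge c_1 q$, and suppose $\tilde n_1,\tilde n_2,\tilde n_3,\tilde n_4 \in \mathbb{Z}^2$ satisfy $\tilde n_1 - \tilde n_2 + \tilde n_3 - \tilde n_4 = 0$, $|\langle \tilde n_1 - \tilde n_2, \tilde n_2 - \tilde n_3 \rangle| \ge 1/2$, and $|\tilde n_i| \le K$ for all $i$. Set $n_i := (p\,\tilde j_i,\, q\,\tilde k_i)$ where $\tilde n_i = (\tilde j_i, \tilde k_i)$, and suppose $|\omega^2 q^2 - p^2| \le \varepsilon$ with $4 K^2 \varepsilon \le p^2/2$. Then $|\Omega_\omega(n_1, n_2, n_3, n_4)| \ge p^2/2 \ge c_1^2 q^2 / 2$, where $\Omega_\omega(n_1,\dots,n_4) = \sum_i (-1)^{i+1}(j_i^2 + \omega^2 k_i^2)$. -/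
set_option maxHeartbeats 1000000 in
/-- Lower bound for the small divisors of the anisotropically rescaled set
(Lemma 5 of the paper). -/
theorem small_divisor_lower_bound (p q : ℕ) (ω c₁ : ℝ) (hω : 1 ≤ ω) (hc₁ : 0 < c₁)
    (hpq : c₁ * (q : ℝ) ≤ (p : ℝ))
    (m₁ m₂ m₃ m₄ : ℤ × ℤ) (hmom : m₁ - m₂ + m₃ - m₄ = 0)
    (hinner : (1 : ℝ) / 2 ≤ |(((m₁.1 - m₂.1) * (m₂.1 - m₃.1)
        + (m₁.2 - m₂.2) * (m₂.2 - m₃.2) : ℤ) : ℝ)|)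
    (K : ℝ)
    (hK₁ : Real.sqrt ((m₁.1 : ℝ) ^ 2 + (m₁.2 : ℝ) ^ 2) ≤ K)
    (hK₂ : Real.sqrt ((m₂.1 : ℝ) ^ 2 + (m₂.2 : ℝ) ^ 2) ≤ K)
    (hK₃ : Real.sqrt ((m₃.1 : ℝ) ^ 2 + (m₃.2 : ℝ) ^ 2) ≤ K)
    (hK₄ : Real.sqrt ((m₄.1 : ℝ) ^ 2 + (m₄.2 : ℝ) ^ 2) ≤ K)
    (ε : ℝ) (hε : |ω ^ 2 * (q : ℝ) ^ 2 - (p : ℝ) ^ 2| ≤ ε)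
    (hsmall : 4 * K ^ 2 * ε ≤ (p : ℝ) ^ 2 / 2) :
    (p : ℝ) ^ 2 / 2 ≤
      |(((p : ℝ) * m₁.1) ^ 2 + ω ^ 2 * ((q : ℝ) * m₁.2) ^ 2)
        - (((p : ℝ) * m₂.1) ^ 2 + ω ^ 2 * ((q : ℝ) * m₂.2) ^ 2)
        + (((p : ℝ) * m₃.1) ^ 2 + ω ^ 2 * ((q : ℝ) * m₃.2) ^ 2)
        - (((p : ℝ) * m₄.1) ^ 2 + ω ^ 2 * ((q : ℝ) * m₄.2) ^ 2)| ∧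
    c₁ ^ 2 * (q : ℝ) ^ 2 / 2 ≤ (p : ℝ) ^ 2 / 2 := by
  have hK0 : 0 ≤ K := le_trans (Real.sqrt_nonneg _) hK₁
  have hsq : ∀ m : ℤ × ℤ, Real.sqrt ((m.1 : ℝ) ^ 2 + (m.2 : ℝ) ^ 2) ≤ K →
      (m.1 : ℝ) ^ 2 + (m.2 : ℝ) ^ 2 ≤ K ^ 2 := by
    intro m hm
    have h0 : (0:ℝ) ≤ (m.1 : ℝ) ^ 2 + (m.2 : ℝ) ^ 2 := by positivity
    nlinarith [Real.sq_sqrt h0, Real.sqrt_nonneg ((m.1 : ℝ) ^ 2 + (m.2 : ℝ) ^ 2)]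
  have h1 := hsq m₁ hK₁
  have h2 := hsq m₂ hK₂
  have h3 := hsq m₃ hK₃
  have h4 := hsq m₄ hK₄
  clear hsq hK₁ hK₂ hK₃ hK₄
  have hmom1 : m₁.1 - m₂.1 + m₃.1 - m₄.1 = 0 := by
    have := congrArg Prod.fst hmom; simpa using this
  have hmom2 : m₁.2 - m₂.2 + m₃.2 - m₄.2 = 0 := by
    have := congrArg Prod.snd hmom; simpa using this
  clear hmom
  -- abbreviations as real numbers
  obtain ⟨a₁, ha₁⟩ : ∃ x : ℝ, x = (m₁.1 : ℝ) := ⟨_, rfl⟩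
  obtain ⟨a₂, ha₂⟩ : ∃ x : ℝ, x = (m₂.1 : ℝ) := ⟨_, rfl⟩
  obtain ⟨a₃, ha₃⟩ : ∃ x : ℝ, x = (m₃.1 : ℝ) := ⟨_, rfl⟩
  obtain ⟨a₄, ha₄⟩ : ∃ x : ℝ, x = (m₄.1 : ℝ) := ⟨_, rfl⟩
  obtain ⟨b₁, hb₁⟩ : ∃ x : ℝ, x = (m₁.2 : ℝ) := ⟨_, rfl⟩
  obtain ⟨b₂, hb₂⟩ : ∃ x : ℝ, x = (m₂.2 : ℝ) := ⟨_, rfl⟩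
  obtain ⟨b₃, hb₃⟩ : ∃ x : ℝ, x = (m₃.2 : ℝ) := ⟨_, rfl⟩
  obtain ⟨b₄, hb₄⟩ : ∃ x : ℝ, x = (m₄.2 : ℝ) := ⟨_, rfl⟩
  have hm1r : a₄ = a₁ - a₂ + a₃ := by
    rw [ha₁, ha₂, ha₃, ha₄]; exact_mod_cast (by omega : m₄.1 = m₁.1 - m₂.1 + m₃.1)
  have hm2r : b₄ = b₁ - b₂ + b₃ := by
    rw [hb₁, hb₂, hb₃, hb₄]; exact_mod_cast (by omega : m₄.2 = m₁.2 - m₂.2 + m₃.2)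
  have h1' : a₁ ^ 2 + b₁ ^ 2 ≤ K ^ 2 := by rw [ha₁, hb₁]; exact h1
  have h2' : a₂ ^ 2 + b₂ ^ 2 ≤ K ^ 2 := by rw [ha₂, hb₂]; exact h2
  have h3' : a₃ ^ 2 + b₃ ^ 2 ≤ K ^ 2 := by rw [ha₃, hb₃]; exact h3
  have h4' : a₄ ^ 2 + b₄ ^ 2 ≤ K ^ 2 := by rw [ha₄, hb₄]; exact h4
  have hinner' : (1 : ℝ) / 2 ≤ |(a₁ - a₂) * (a₂ - a₃) + (b₁ - b₂) * (b₂ - b₃)| := by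
    rw [ha₁, ha₂, ha₃, hb₁, hb₂, hb₃]
    convert hinner using 2
    push_cast
    ring
  clear h1 h2 h3 h4 hinner hmom1 hmom2
  have hε0 : 0 ≤ ε := le_trans (abs_nonneg _) hε
  obtain ⟨hDl, hDu⟩ := abs_le.mp hε
  -- bounds on the product ab := (b₁ - b₂) * (b₂ - b₃)
  have hub : (b₁ - b₂) * (b₂ - b₃) ≤ 2 * K ^ 2 := by
    nlinarith [sq_nonneg (b₁ - b₂), sq_nonneg (b₂ - b₃), sq_nonneg (b₁ + b₃),
      sq_nonneg a₁, sq_nonneg a₃]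
  have hlb : -(2 * K ^ 2) ≤ (b₁ - b₂) * (b₂ - b₃) := by
    have hrw : (b₁ - b₂) * (b₂ - b₃) = (b₄ - b₃) * (b₂ - b₃) := by rw [hm2r]; ring
    rw [hrw]
    nlinarith [sq_nonneg (b₄ - b₃), sq_nonneg (b₂ - b₃), sq_nonneg (b₄ + b₂),
      sq_nonneg a₄, sq_nonneg a₂]
  -- perturbation bound
  have hPu : 2 * (ω ^ 2 * (q : ℝ) ^ 2 - (p : ℝ) ^ 2) * ((b₁ - b₂) * (b₂ - b₃))
      ≤ (p : ℝ) ^ 2 / 2 := by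
    nlinarith [mul_nonneg (by linarith : (0:ℝ) ≤ ε - (ω ^ 2 * (q : ℝ) ^ 2 - (p : ℝ) ^ 2))
        (by linarith : (0:ℝ) ≤ 2 * K ^ 2 + (b₁ - b₂) * (b₂ - b₃)),
      mul_nonneg (by linarith : (0:ℝ) ≤ ε + (ω ^ 2 * (q : ℝ) ^ 2 - (p : ℝ) ^ 2))
        (by linarith : (0:ℝ) ≤ 2 * K ^ 2 - (b₁ - b₂) * (b₂ - b₃))]
  have hPl : -((p : ℝ) ^ 2 / 2)
      ≤ 2 * (ω ^ 2 * (q : ℝ) ^ 2 - (p : ℝ) ^ 2) * ((b₁ - b₂) * (b₂ - b₃)) := by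
    nlinarith [mul_nonneg (by linarith : (0:ℝ) ≤ ε - (ω ^ 2 * (q : ℝ) ^ 2 - (p : ℝ) ^ 2))
        (by linarith : (0:ℝ) ≤ 2 * K ^ 2 - (b₁ - b₂) * (b₂ - b₃)),
      mul_nonneg (by linarith : (0:ℝ) ≤ ε + (ω ^ 2 * (q : ℝ) ^ 2 - (p : ℝ) ^ 2))
        (by linarith : (0:ℝ) ≤ 2 * K ^ 2 + (b₁ - b₂) * (b₂ - b₃))]
  have hp0 : (0:ℝ) ≤ (p : ℝ) ^ 2 := sq_nonneg _
  constructor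
  · have heq : (((p : ℝ) * m₁.1) ^ 2 + ω ^ 2 * ((q : ℝ) * m₁.2) ^ 2)
        - (((p : ℝ) * m₂.1) ^ 2 + ω ^ 2 * ((q : ℝ) * m₂.2) ^ 2)
        + (((p : ℝ) * m₃.1) ^ 2 + ω ^ 2 * ((q : ℝ) * m₃.2) ^ 2)
        - (((p : ℝ) * m₄.1) ^ 2 + ω ^ 2 * ((q : ℝ) * m₄.2) ^ 2)
      = 2 * (p : ℝ) ^ 2 * ((a₁ - a₂) * (a₂ - a₃) + (b₁ - b₂) * (b₂ - b₃))
        + 2 * (ω ^ 2 * (q : ℝ) ^ 2 - (p : ℝ) ^ 2) * ((b₁ - b₂) * (b₂ - b₃)) := by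
      rw [← ha₁, ← ha₂, ← ha₃, ← ha₄, ← hb₁, ← hb₂, ← hb₃, ← hb₄, hm1r, hm2r]
      ring
    rw [heq]
    rcases abs_cases ((a₁ - a₂) * (a₂ - a₃) + (b₁ - b₂) * (b₂ - b₃)) with ⟨hs, _⟩ | ⟨hs, _⟩
    · rw [hs] at hinner'
      refine le_trans ?_ (le_abs_self _)
      have hmm := mul_le_mul_of_nonneg_left hinner' hp0
      linarith [hPl, hmm]
    · rw [hs] at hinner'
      refine le_trans ?_ (neg_le_abs _)
      have hS' : (a₁ - a₂) * (a₂ - a₃) + (b₁ - b₂) * (b₂ - b₃) ≤ -(1/2) := by linarith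
      have hmm := mul_le_mul_of_nonneg_left hS' hp0
      linarith [hPu, hmm]
  · have hq0 : (0:ℝ) ≤ (q:ℝ) := Nat.cast_nonneg q
    have := mul_self_le_mul_self (mul_nonneg hc₁.le hq0) hpq
    linarith [this]
end
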